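/- MRD satisfies the triangle inequality: for any X1, X2, X3 ∈ ℝ^{m×n}, MRD(X1, X3) ≤ MRD(X1, X2) + MRD(X2, X3), where MRD(A, B) is the infimum over S_AB, S_BA with spectral norms at most 1 of sqrt(w1·‖A − B·S_AB‖_F² + w2·‖B − A·S_BA‖_F²) with fixed weights w1, w2 ≥ 0. -/

import Mathlib

open scoped Matrix.Norms.L2Operator

noncomputable def specNorm {m n : ℕ} (A : Matrix (Fin m) (Fin n) ℝ) : ℝ :=
  ‖LinearMap.toContinuousLinearMap (Matrix.toEuclideanLin A)‖

noncomputable def frobNorm {m n : ℕ} (A : Matrix (Fin m) (Fin n) ℝ) : ℝ :=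
  Real.sqrt (∑ i, ∑ j, (A i j)^2)

lemma specNorm_eq {m n : ℕ} (A : Matrix (Fin m) (Fin n) ℝ) : specNorm A = ‖A‖ := rfl

lemma specNorm_nonneg {m n : ℕ} (A : Matrix (Fin m) (Fin n) ℝ) : 0 ≤ specNorm A :=
  norm_nonneg _

lemma specNorm_zero {m n : ℕ} : specNorm (0 : Matrix (Fin m) (Fin n) ℝ) = 0 := by
  rw [specNorm_eq]; exact norm_zero

lemma specNorm_transpose {m n : ℕ} (A : Matrix (Fin m) (Fin n) ℝ) :
    specNorm A.transpose = specNorm A := by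
  rw [specNorm_eq, specNorm_eq, ← Matrix.l2_opNorm_conjTranspose A]
  congr 1

lemma specNorm_mul_le {m n l : ℕ} (A : Matrix (Fin m) (Fin n) ℝ) (B : Matrix (Fin n) (Fin l) ℝ) :
    specNorm (A * B) ≤ specNorm A * specNorm B := by
  simpa [specNorm_eq] using Matrix.l2_opNorm_mul A B

lemma frobNorm_nonneg {m n : ℕ} (A : Matrix (Fin m) (Fin n) ℝ) : 0 ≤ frobNorm A :=
  Real.sqrt_nonneg _

lemma frobNorm_eq_norm {m n : ℕ} (A : Matrix (Fin m) (Fin n) ℝ) :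
    frobNorm A = ‖(WithLp.equiv 2 (Fin m × Fin n → ℝ)).symm (fun p => A p.1 p.2)‖ := by
  rw [EuclideanSpace.norm_eq, frobNorm, Fintype.sum_prod_type]
  congr 1
  refine Finset.sum_congr rfl fun i _ => Finset.sum_congr rfl fun j _ => ?_
  simp [Real.norm_eq_abs, sq_abs]

lemma frobNorm_add_le {m n : ℕ} (A B : Matrix (Fin m) (Fin n) ℝ) :
    frobNorm (A + B) ≤ frobNorm A + frobNorm B := by
  rw [frobNorm_eq_norm, frobNorm_eq_norm, frobNorm_eq_norm]
  have : (WithLp.equiv 2 (Fin m × Fin n → ℝ)).symm (fun p => (A + B) p.1 p.2)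
      = (WithLp.equiv 2 (Fin m × Fin n → ℝ)).symm (fun p => A p.1 p.2)
        + (WithLp.equiv 2 (Fin m × Fin n → ℝ)).symm (fun p => B p.1 p.2) := rfl
  rw [this]
  exact norm_add_le _ _

lemma frobNorm_mul_le {m n l : ℕ} (A : Matrix (Fin m) (Fin n) ℝ)
    (B : Matrix (Fin n) (Fin l) ℝ) :
    frobNorm (A * B) ≤ frobNorm A * specNorm B := by
  have hs : 0 ≤ specNorm B := specNorm_nonneg B
  have key : ∀ i, ∑ j, ((A * B) i j)^2 ≤ (∑ j, (A i j)^2) * (specNorm B)^2 := by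
    intro i
    set x : EuclideanSpace ℝ (Fin n) := (WithLp.equiv 2 (Fin n → ℝ)).symm (A i) with hx
    have hmv : (EuclideanSpace.equiv (Fin l) ℝ).symm (B.transpose.mulVec x)
        = (WithLp.equiv 2 (Fin l → ℝ)).symm (fun j => (A * B) i j) := by
      apply (WithLp.equiv 2 (Fin l → ℝ)).injective
      ext j
      simp [hx, Matrix.mulVec, Matrix.mul_apply, dotProduct, WithLp.equiv_symm_apply, PiLp.toLp_apply, mul_comm]
    have h1 : ‖(WithLp.equiv 2 (Fin l → ℝ)).symm (fun j => (A * B) i j)‖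
        ≤ specNorm B * ‖x‖ := by
      rw [← hmv, ← specNorm_transpose B, specNorm_eq]
      exact Matrix.l2_opNorm_mulVec B.transpose x
    have h2 : ‖(WithLp.equiv 2 (Fin l → ℝ)).symm (fun j => (A * B) i j)‖^2
        ≤ (specNorm B * ‖x‖)^2 := by
      apply sq_le_sq' _ h1
      nlinarith [norm_nonneg ((WithLp.equiv 2 (Fin l → ℝ)).symm (fun j => (A * B) i j)), mul_nonneg hs (norm_nonneg x)]
    have e1 : ‖(WithLp.equiv 2 (Fin l → ℝ)).symm (fun j => (A * B) i j)‖^2 = ∑ j, ((A * B) i j)^2 := by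
      rw [EuclideanSpace.norm_eq, Real.sq_sqrt (by positivity)]
      refine Finset.sum_congr rfl fun j _ => by simp [Real.norm_eq_abs, sq_abs]
    have e2 : ‖x‖^2 = ∑ j, (A i j)^2 := by
      rw [hx, EuclideanSpace.norm_eq, Real.sq_sqrt (by positivity)]
      refine Finset.sum_congr rfl fun j _ => by simp [Real.norm_eq_abs, sq_abs]
    calc ∑ j, ((A * B) i j)^2 = _ := e1.symm
      _ ≤ (specNorm B * ‖x‖)^2 := h2
      _ = (∑ j, (A i j)^2) * (specNorm B)^2 := by rw [mul_pow, e2]; ring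
  have hsum : ∑ i, ∑ j, ((A * B) i j)^2 ≤ (∑ i, ∑ j, (A i j)^2) * (specNorm B)^2 := by
    rw [Finset.sum_mul]
    exact Finset.sum_le_sum fun i _ => key i
  calc frobNorm (A * B) = Real.sqrt (∑ i, ∑ j, ((A * B) i j)^2) := rfl
    _ ≤ Real.sqrt ((∑ i, ∑ j, (A i j)^2) * (specNorm B)^2) := Real.sqrt_le_sqrt hsum
    _ = frobNorm A * specNorm B := by
        rw [Real.sqrt_mul (by positivity), Real.sqrt_sq hs]; rfl

lemma mink (w1 w2 a1 a2 b1 b2 : ℝ) (hw1 : 0 ≤ w1) (hw2 : 0 ≤ w2) :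
    Real.sqrt (w1*(a1+a2)^2 + w2*(b1+b2)^2)
      ≤ Real.sqrt (w1*a1^2+w2*b1^2) + Real.sqrt (w1*a2^2+w2*b2^2) := by
  have hP : (0:ℝ) ≤ w1*a1^2+w2*b1^2 := by positivity
  have hQ : (0:ℝ) ≤ w1*a2^2+w2*b2^2 := by positivity
  have hcs : w1*a1*a2 + w2*b1*b2 ≤ Real.sqrt ((w1*a1^2+w2*b1^2) * (w1*a2^2+w2*b2^2)) := by
    rcases le_or_gt (w1*a1*a2 + w2*b1*b2) 0 with h | h
    · exact h.trans (Real.sqrt_nonneg _)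
    · rw [show w1*a1*a2 + w2*b1*b2 = Real.sqrt ((w1*a1*a2 + w2*b1*b2)^2) from
        (Real.sqrt_sq h.le).symm]
      apply Real.sqrt_le_sqrt
      nlinarith [sq_nonneg (a1*b2 - a2*b1), mul_nonneg hw1 hw2]
  rw [Real.sqrt_mul hP] at hcs
  rw [show Real.sqrt (w1*a1^2+w2*b1^2) + Real.sqrt (w1*a2^2+w2*b2^2)
      = Real.sqrt ((Real.sqrt (w1*a1^2+w2*b1^2) + Real.sqrt (w1*a2^2+w2*b2^2))^2) from
    (Real.sqrt_sq (by positivity)).symm]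
  apply Real.sqrt_le_sqrt
  have hsq : (Real.sqrt (w1*a1^2+w2*b1^2) + Real.sqrt (w1*a2^2+w2*b2^2))^2
      = (w1*a1^2+w2*b1^2) + (w1*a2^2+w2*b2^2)
        + 2 * (Real.sqrt (w1*a1^2+w2*b1^2) * Real.sqrt (w1*a2^2+w2*b2^2)) := by
    rw [add_sq, Real.sq_sqrt hP, Real.sq_sqrt hQ]; ring
  rw [hsq]
  nlinarith [hcs]

noncomputable def MRD {m n1 n2 : ℕ} (w1 w2 : ℝ) (X1 : Matrix (Fin m) (Fin n1) ℝ)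
    (X2 : Matrix (Fin m) (Fin n2) ℝ) : ℝ :=
  sInf {d : ℝ | ∃ (S12 : Matrix (Fin n2) (Fin n1) ℝ) (S21 : Matrix (Fin n1) (Fin n2) ℝ),
    specNorm S12 ≤ 1 ∧ specNorm S21 ≤ 1 ∧
    d = Real.sqrt (w1 * (frobNorm (X1 - X2 * S12))^2 + w2 * (frobNorm (X2 - X1 * S21))^2)}

lemma MRDset_nonempty {m n1 n2 : ℕ} (w1 w2 : ℝ) (X1 : Matrix (Fin m) (Fin n1) ℝ)
    (X2 : Matrix (Fin m) (Fin n2) ℝ) :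
    {d : ℝ | ∃ (S12 : Matrix (Fin n2) (Fin n1) ℝ) (S21 : Matrix (Fin n1) (Fin n2) ℝ),
    specNorm S12 ≤ 1 ∧ specNorm S21 ≤ 1 ∧
    d = Real.sqrt (w1 * (frobNorm (X1 - X2 * S12))^2 + w2 * (frobNorm (X2 - X1 * S21))^2)}.Nonempty :=
  ⟨_, 0, 0, by rw [specNorm_zero]; norm_num, by rw [specNorm_zero]; norm_num, rfl⟩

lemma MRDset_bddBelow {m n1 n2 : ℕ} (w1 w2 : ℝ) (X1 : Matrix (Fin m) (Fin n1) ℝ)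
    (X2 : Matrix (Fin m) (Fin n2) ℝ) :
    BddBelow {d : ℝ | ∃ (S12 : Matrix (Fin n2) (Fin n1) ℝ) (S21 : Matrix (Fin n1) (Fin n2) ℝ),
    specNorm S12 ≤ 1 ∧ specNorm S21 ≤ 1 ∧
    d = Real.sqrt (w1 * (frobNorm (X1 - X2 * S12))^2 + w2 * (frobNorm (X2 - X1 * S21))^2)} :=
  ⟨0, by rintro d ⟨S12, S21, _, _, rfl⟩; exact Real.sqrt_nonneg _⟩

theorem stmt_4 {m n : ℕ} (w1 w2 : ℝ) (hw1 : 0 ≤ w1) (hw2 : 0 ≤ w2)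
    (X1 X2 X3 : Matrix (Fin m) (Fin n) ℝ) :
    MRD w1 w2 X1 X3 ≤ MRD w1 w2 X1 X2 + MRD w1 w2 X2 X3 := by
  set A := {d : ℝ | ∃ (S12 : Matrix (Fin n) (Fin n) ℝ) (S21 : Matrix (Fin n) (Fin n) ℝ),
    specNorm S12 ≤ 1 ∧ specNorm S21 ≤ 1 ∧
    d = Real.sqrt (w1 * (frobNorm (X1 - X2 * S12))^2 + w2 * (frobNorm (X2 - X1 * S21))^2)} with hA
  set B := {d : ℝ | ∃ (S23 : Matrix (Fin n) (Fin n) ℝ) (S32 : Matrix (Fin n) (Fin n) ℝ),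
    specNorm S23 ≤ 1 ∧ specNorm S32 ≤ 1 ∧
    d = Real.sqrt (w1 * (frobNorm (X2 - X3 * S23))^2 + w2 * (frobNorm (X3 - X2 * S32))^2)} with hB
  have key : ∀ d12 ∈ A, ∀ d23 ∈ B, MRD w1 w2 X1 X3 ≤ d12 + d23 := by
    rintro d12 ⟨S12, S21, hS12, hS21, rfl⟩ d23 ⟨S23, S32, hS23, hS32, rfl⟩
    have hmem : Real.sqrt (w1 * (frobNorm (X1 - X3 * (S23 * S12)))^2
        + w2 * (frobNorm (X3 - X1 * (S21 * S32)))^2) ∈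
        {d : ℝ | ∃ (T13 : Matrix (Fin n) (Fin n) ℝ) (T31 : Matrix (Fin n) (Fin n) ℝ),
          specNorm T13 ≤ 1 ∧ specNorm T31 ≤ 1 ∧
          d = Real.sqrt (w1 * (frobNorm (X1 - X3 * T13))^2 + w2 * (frobNorm (X3 - X1 * T31))^2)} := by
      refine ⟨S23 * S12, S21 * S32, ?_, ?_, rfl⟩
      · calc specNorm (S23 * S12) ≤ specNorm S23 * specNorm S12 := specNorm_mul_le _ _
          _ ≤ 1 * 1 := mul_le_mul hS23 hS12 (specNorm_nonneg _) zero_le_one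
          _ = 1 := one_mul 1
      · calc specNorm (S21 * S32) ≤ specNorm S21 * specNorm S32 := specNorm_mul_le _ _
          _ ≤ 1 * 1 := mul_le_mul hS21 hS32 (specNorm_nonneg _) zero_le_one
          _ = 1 := one_mul 1
    have h0 : MRD w1 w2 X1 X3 ≤ Real.sqrt (w1 * (frobNorm (X1 - X3 * (S23 * S12)))^2
        + w2 * (frobNorm (X3 - X1 * (S21 * S32)))^2) :=
      csInf_le (MRDset_bddBelow w1 w2 X1 X3) hmem
    refine h0.trans ?_
    set a1 := frobNorm (X1 - X2 * S12) with ha1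
    set b1 := frobNorm (X2 - X1 * S21) with hb1
    set a2 := frobNorm (X2 - X3 * S23) with ha2
    set b2 := frobNorm (X3 - X2 * S32) with hb2
    have hf : frobNorm (X1 - X3 * (S23 * S12)) ≤ a1 + a2 := by
      have hd : X1 - X3 * (S23 * S12) = (X1 - X2 * S12) + (X2 - X3 * S23) * S12 := by
        rw [Matrix.sub_mul, Matrix.mul_assoc]; abel
      rw [hd]
      refine (frobNorm_add_le _ _).trans ?_
      have := (frobNorm_mul_le (X2 - X3 * S23) S12).trans
        (mul_le_of_le_one_right (frobNorm_nonneg _) hS12)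
      linarith
    have hg : frobNorm (X3 - X1 * (S21 * S32)) ≤ b1 + b2 := by
      have hd : X3 - X1 * (S21 * S32) = (X3 - X2 * S32) + (X2 - X1 * S21) * S32 := by
        rw [Matrix.sub_mul, Matrix.mul_assoc]; abel
      rw [hd]
      refine (frobNorm_add_le _ _).trans ?_
      have := (frobNorm_mul_le (X2 - X1 * S21) S32).trans
        (mul_le_of_le_one_right (frobNorm_nonneg _) hS32)
      linarith
    have step1 : Real.sqrt (w1 * (frobNorm (X1 - X3 * (S23 * S12)))^2
        + w2 * (frobNorm (X3 - X1 * (S21 * S32)))^2)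
        ≤ Real.sqrt (w1 * (a1 + a2)^2 + w2 * (b1 + b2)^2) := by
      apply Real.sqrt_le_sqrt
      have h1 := frobNorm_nonneg (X1 - X3 * (S23 * S12))
      have h2 := frobNorm_nonneg (X3 - X1 * (S21 * S32))
      have e1 : (frobNorm (X1 - X3 * (S23 * S12)))^2 ≤ (a1 + a2)^2 := pow_le_pow_left₀ h1 hf 2
      have e2 : (frobNorm (X3 - X1 * (S21 * S32)))^2 ≤ (b1 + b2)^2 := pow_le_pow_left₀ h2 hg 2
      have := mul_le_mul_of_nonneg_left e1 hw1
      have := mul_le_mul_of_nonneg_left e2 hw2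
      linarith
    refine step1.trans ?_
    have := mink w1 w2 a1 a2 b1 b2 hw1 hw2
    linarith
  have h1 : ∀ d23 ∈ B, MRD w1 w2 X1 X3 - d23 ≤ MRD w1 w2 X1 X2 := by
    intro d23 hd23
    refine le_csInf (MRDset_nonempty w1 w2 X1 X2) fun d12 hd12 => ?_
    linarith [key d12 hd12 d23 hd23]
  have h2 : MRD w1 w2 X1 X3 - MRD w1 w2 X1 X2 ≤ MRD w1 w2 X2 X3 := by
    refine le_csInf (MRDset_nonempty w1 w2 X2 X3) fun d23 hd23 => ?_
    linarith [h1 d23 hd23]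
  linarith
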